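/- Successive compute-and-forward loses at most half a bit per stage: let σ² > 0 and let a₁, a₂, …, a_m be nonnegative reals. Then Σ_{i=1}^{m} C⁺( a_i / (σ² + Σ_{j=i+1}^{m} a_j) − 1/2 ) ≥ C( (Σ_{i=1}^{m} a_i) / σ² ) − m/2, where C(x) = (1/2)·log₂(1 + x) and C⁺(y) = max{0, (1/2)·log₂(1 + y)}. That is, when the relay successively decodes m modulo-lattice sums of powers a₁, …, a_m (treating not-yet-decoded signals as noise, each stage subject to the lattice rate constraint of Lemma 1), the achievable sum of rates is within m/2 bits of C of the total received SNR. -/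

import Mathlib

/-- The Gaussian capacity function `C(x) = (1/2)·log₂(1 + x)`. -/
noncomputable def gaussC (x : ℝ) : ℝ := (1 / 2) * Real.logb 2 (1 + x)

/-- Its positive part `C⁺(x) = max {0, C(x)}`. -/
noncomputable def gaussCplus (x : ℝ) : ℝ := max 0 (gaussC x)

/-
Halving the signal-to-noise ratio costs exactly half a bit, and `1 + x - 1/2 ≥ (1 + x)/2`, so each
stage of successive decoding loses at most half a bit against `C(a_i / N_i)`, where `N_i` is the
effective noise of stage `i`. Since `N_i + a_i = N_{i-1}`, the chain rule
`C((a + R)/σ²) = C(R/σ²) + C(a/(σ² + R))` makes the sum of the `C(a_i / N_i)` telescope to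
`C((Σ a_i)/σ²)`.
-/

theorem gaussC_sub_half_le {x : ℝ} (hx : 0 ≤ x) : gaussC x - 1 / 2 ≤ gaussC (x - 1 / 2) := by
  have halve : gaussC x - 1 / 2 = 1 / 2 * Real.logb 2 ((1 + x) / 2) := by
    rw [gaussC, Real.logb_div (by linarith) two_ne_zero, Real.logb_self_eq_one one_lt_two]
    ring
  rw [halve, gaussC]
  gcongr
  · exact one_lt_two
  · linarith

theorem gaussC_sub_half_le_gaussCplus {x : ℝ} (hx : 0 ≤ x) :
    gaussC x - 1 / 2 ≤ gaussCplus (x - 1 / 2) :=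
  (gaussC_sub_half_le hx).trans (le_max_right _ _)

theorem gaussC_add_div {σ2 R a : ℝ} (hσ2 : 0 < σ2) (hR : 0 < σ2 + R) (ha : 0 < σ2 + R + a) :
    gaussC ((a + R) / σ2) = gaussC (R / σ2) + gaussC (a / (σ2 + R)) := by
  have factor : 1 + (a + R) / σ2 = (1 + R / σ2) * (1 + a / (σ2 + R)) := by
    field_simp
    ring
  have h₁ : 1 + R / σ2 ≠ 0 := by
    rw [one_add_div hσ2.ne']
    positivity
  have h₂ : 1 + a / (σ2 + R) ≠ 0 := by
    rw [one_add_div hR.ne']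
    positivity
  rw [gaussC, gaussC, gaussC, factor, Real.logb_mul h₁ h₂]
  ring

theorem sum_gaussC_successive {σ2 : ℝ} (hσ2 : 0 < σ2) :
    ∀ {m : ℕ} (a : Fin m → ℝ), (∀ i, 0 ≤ a i) →
      ∑ i : Fin m, gaussC (a i / (σ2 + ∑ j ∈ Finset.Ioi i, a j)) = gaussC ((∑ i, a i) / σ2)
  | 0, _, _ => by simp [gaussC]
  | m + 1, a, ha => by
    have hR : 0 ≤ ∑ j : Fin m, a j.succ := Finset.sum_nonneg fun j _ => ha j.succ
    rw [Fin.sum_univ_succ, Fin.sum_univ_succ, Fin.sum_Ioi_zero]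
    simp only [Fin.sum_Ioi_succ]
    rw [sum_gaussC_successive hσ2 (fun j => a j.succ) (fun j => ha j.succ),
      gaussC_add_div hσ2 (by linarith) (by linarith [ha 0]), add_comm]

/-- Successive compute-and-forward loses at most half a bit
per stage: with noise variance `σ² > 0` and nonnegative stage powers
`a 1, …, a m`,
`Σ_i C⁺(a i / (σ² + Σ_{j>i} a j) − 1/2) ≥ C((Σ_i a i) / σ²) − m/2`. -/
theorem successive_compute_forward_gap
    (σ2 : ℝ) (hσ2 : 0 < σ2) (m : ℕ) (a : Fin m → ℝ) (ha : ∀ i, 0 ≤ a i) :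
    ∑ i : Fin m, gaussCplus (a i / (σ2 + ∑ j ∈ Finset.Ioi i, a j) - 1 / 2) ≥
      gaussC ((∑ i : Fin m, a i) / σ2) - m / 2 := by
  have noise_nonneg (i : Fin m) : 0 ≤ σ2 + ∑ j ∈ Finset.Ioi i, a j :=
    add_nonneg hσ2.le (Finset.sum_nonneg fun j _ => ha j)
  calc gaussC ((∑ i : Fin m, a i) / σ2) - m / 2
      = ∑ i : Fin m, (gaussC (a i / (σ2 + ∑ j ∈ Finset.Ioi i, a j)) - 1 / 2) := by
        rw [Finset.sum_sub_distrib, sum_gaussC_successive hσ2 a ha]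
        simp [div_eq_mul_one_div (m : ℝ)]
    _ ≤ _ := Finset.sum_le_sum fun i _ =>
        gaussC_sub_half_le_gaussCplus (div_nonneg (ha i) (noise_nonneg i))
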